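/- For every integer s, ∑_{n=1}^∞ n·F_{2n+s} / ((2n+1)·C_n) = 2·F_{s+1} + (8/5)·F_s + (8·√5·π·ω/125)·(√5·α·F_{s+1} + 2·F_s). -/

import Mathlib

/-- The golden ratio `α = (1+√5)/2`. -/
noncomputable def goldenAlpha : ℝ := (1 + Real.sqrt 5) / 2

/-- `β = (1-√5)/2`. -/
noncomputable def goldenBeta : ℝ := (1 - Real.sqrt 5) / 2

/-- Fibonacci numbers with integer index, via the Binet formula. -/
noncomputable def fibZ (s : ℤ) : ℝ := (goldenAlpha ^ s - goldenBeta ^ s) / Real.sqrt 5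

/-- Lucas numbers with integer index, via the Binet formula. -/
noncomputable def lucasZ (s : ℤ) : ℝ := goldenAlpha ^ s + goldenBeta ^ s

/-- `ω = √(√5·α)`. -/
noncomputable def omegaConst : ℝ := Real.sqrt (Real.sqrt 5 * goldenAlpha)

open Real MeasureTheory intervalIntegral


lemma s5_pos : (0:ℝ) < sqrt 5 := sqrt_pos.mpr (by norm_num)
lemma s5_sq : sqrt 5 ^ 2 = 5 := sq_sqrt (by norm_num)
lemma s5_lt : sqrt 5 < 3 := by nlinarith [s5_sq, s5_pos]
lemma s5_gt : 1 < sqrt 5 := by nlinarith [s5_sq, s5_pos]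

lemma ga_pos : 0 < goldenAlpha := by unfold goldenAlpha; linarith [s5_pos]
lemma ga_ne : goldenAlpha ≠ 0 := ne_of_gt ga_pos
lemma ga_sq : goldenAlpha ^ 2 = goldenAlpha + 1 := by
  unfold goldenAlpha; nlinarith [s5_sq]
lemma gb_neg : goldenBeta < 0 := by unfold goldenBeta; linarith [s5_gt]
lemma gb_ne : goldenBeta ≠ 0 := ne_of_lt gb_neg
lemma gb_sq : goldenBeta ^ 2 = goldenBeta + 1 := by
  unfold goldenBeta; nlinarith [s5_sq]
lemma gab : goldenAlpha * goldenBeta = -1 := by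
  unfold goldenAlpha goldenBeta; nlinarith [s5_sq]
lemma ga_lt_two : goldenAlpha < 2 := by unfold goldenAlpha; linarith [s5_lt]
lemma ga_gt_one : 1 < goldenAlpha := by unfold goldenAlpha; linarith [s5_gt]

lemma om_pos : 0 < omegaConst := sqrt_pos.mpr (mul_pos s5_pos ga_pos)
lemma om_ne : omegaConst ≠ 0 := ne_of_gt om_pos
lemma om_sq : omegaConst ^ 2 = sqrt 5 * goldenAlpha :=
  sq_sqrt (mul_pos s5_pos ga_pos).le

lemma sin_pi_div_five : sin (π/5) = omegaConst / (2 * goldenAlpha) := by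
  have h1 : sin (π/5) > 0 := sin_pos_of_pos_of_lt_pi (by positivity) (by nlinarith [pi_pos])
  have h2 : sin (π/5) ^ 2 = (omegaConst / (2 * goldenAlpha)) ^ 2 := by
    have hpy := sin_sq_add_cos_sq (π/5)
    rw [cos_pi_div_five] at hpy
    have hx : (omegaConst / (2*goldenAlpha)) ^ 2 = sqrt 5 / (4 * goldenAlpha) := by
      have h1 := ga_ne
      rw [div_pow, om_sq]
      field_simp
      ring
    rw [hx]
    have h5 : sqrt 5 / (4 * goldenAlpha) = 1 - ((1+sqrt 5)/4)^2 := by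
      rw [div_eq_iff (ne_of_gt (by nlinarith [ga_pos] : (0:ℝ) < 4 * goldenAlpha))]
      unfold goldenAlpha
      nlinarith [s5_sq]
    rw [h5]; linarith [hpy]
  have h3 : 0 < omegaConst / (2*goldenAlpha) := div_pos om_pos (by nlinarith [ga_pos])
  nlinarith [h1, h3, h2]

lemma arctan_ga : arctan (goldenAlpha ^ 2 / omegaConst) = 3 * π / 10 := by
  have hb1 : -(π/2) < 3*π/10 := by linarith [pi_pos]
  have hb2 : 3*π/10 < π/2 := by linarith [pi_pos]
  have hca : ((1:ℝ)+sqrt 5)/4 = goldenAlpha / 2 := by unfold goldenAlpha; ring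
  have ht : tan (3*π/10) = goldenAlpha ^ 2 / omegaConst := by
    have h0 : (3:ℝ)*π/10 = π/2 - π/5 := by ring
    rw [h0, tan_pi_div_two_sub, tan_eq_sin_div_cos, sin_pi_div_five, cos_pi_div_five, hca]
    rw [inv_div]
    have h1 := ga_ne
    have h2 := om_ne
    field_simp
  rw [← ht, arctan_tan hb1 hb2]

lemma arctan_gb : arctan (goldenAlpha * goldenBeta ^ 2 / omegaConst) = π / 10 := by
  have hb1 : -(π/2) < π/10 := by linarith [pi_pos]
  have hb2 : π/10 < π/2 := by linarith [pi_pos]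
  have hab2 : goldenAlpha * goldenBeta ^ 2 = goldenAlpha - 1 := by
    rw [gb_sq]; nlinarith [gab]
  have hca : ((1:ℝ)+sqrt 5)/4 = goldenAlpha / 2 := by unfold goldenAlpha; ring
  have ht : tan (π/10) = goldenAlpha * goldenBeta ^ 2 / omegaConst := by
    have h0 : (π:ℝ)/10 = π/2 - 2*(π/5) := by ring
    rw [h0, tan_pi_div_two_sub, tan_eq_sin_div_cos, sin_two_mul, cos_two_mul,
      sin_pi_div_five, cos_pi_div_five, hca, hab2]
    have hA : 2 * (omegaConst/(2*goldenAlpha)) * (goldenAlpha/2) = omegaConst/2 := by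
      have h1 := ga_ne; field_simp
    have h2 : 2 * (goldenAlpha/2)^2 - 1 = (goldenAlpha - 1)/2 := by
      have := ga_sq; nlinarith
    rw [hA, h2, inv_div]
    have h3 := om_ne
    field_simp
  rw [← ht, arctan_tan hb1 hb2]


section BetaSec
open Nat

lemma prod_range_asc (n k : ℕ) : ∏ j ∈ Finset.range k, (n + 1 + j) = (n+1).ascFactorial k := by
  induction k with
  | zero => simp
  | succ k ih => rw [Finset.prod_range_succ, ih, Nat.ascFactorial_succ, mul_comm]

lemma asc_eq (m : ℕ) : (m+1).ascFactorial (m+1) = (2*m+1) * m.centralBinom * m ! := by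
  have h1 : m ! * (m+1).ascFactorial (m+1) = (2*m+1)! := by
    rw [Nat.factorial_mul_ascFactorial]; ring_nf
  have h2 : (2*m+1) * m.centralBinom * (m ! * m !) = (2*m+1)! := by
    rw [Nat.centralBinom]
    have h0 := Nat.choose_mul_factorial_mul_factorial (Nat.le_mul_of_pos_left m two_pos)
    have h3 : 2*m - m = m := by omega
    rw [h3] at h0
    rw [Nat.factorial_succ]
    calc (2*m+1) * (2*m).choose m * (m ! * m !)
        = (2*m+1) * ((2*m).choose m * m ! * m !) := by ring
      _ = (2*m+1) * (2*m)! := by rw [h0]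
  have : m ! * ((m+1).ascFactorial (m+1)) = m ! * ((2*m+1) * m.centralBinom * m !) := by
    rw [h1, ← h2]; ring
  exact Nat.eq_of_mul_eq_mul_left m.factorial_pos this

lemma beta_nat (m : ℕ) :
    ∫ t in (0:ℝ)..1, t ^ m * (1 - t) ^ m
      = 1 / ((2 * (m:ℝ) + 1) * m.centralBinom) := by
  have h := Complex.betaIntegral_eval_nat_add_one_right (u := (m:ℂ) + 1)
    (by simp only [Complex.add_re, Complex.natCast_re, Complex.one_re]; positivity) m
  rw [Complex.betaIntegral] at h
  have heq : ∀ t : ℝ, (t:ℂ) ^ ((m:ℂ) + 1 - 1) * (1 - (t:ℂ)) ^ ((m:ℂ) + 1 - 1)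
      = ((t ^ m * (1 - t) ^ m : ℝ) : ℂ) := by
    intro t
    rw [add_sub_cancel_right, Complex.cpow_natCast, Complex.cpow_natCast]
    push_cast
    ring
  rw [intervalIntegral.integral_congr (fun t _ => heq t), intervalIntegral.integral_ofReal] at h
  have hprod : ∏ j ∈ Finset.range (m+1), ((m:ℂ) + 1 + (j:ℕ))
      = ((m+1).ascFactorial (m+1) : ℂ) := by
    rw [← prod_range_asc]
    push_cast
    rfl
  rw [hprod] at h
  have hr : (∫ t in (0:ℝ)..1, t ^ m * (1 - t) ^ m)
      = (m ! : ℝ) / ((m+1).ascFactorial (m+1) : ℝ) := by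
    apply Complex.ofReal_inj.mp
    rw [h]; push_cast; ring
  rw [hr, asc_eq]
  have hcb : (0:ℝ) < m.centralBinom := by exact_mod_cast m.centralBinom_pos
  have hm : (0:ℝ) < (m ! : ℝ) := by exact_mod_cast m.factorial_pos
  push_cast
  rw [div_eq_div_iff (by positivity) (by positivity)]
  ring


set_option maxHeartbeats 1000000 in
lemma alg_aux (x D sD q u : ℝ) (hx : 0 < x) (hq : 0 < q) (hD : 0 < D) (hsD : 0 < sD)
    (hsD2 : sD^2 = D) (hDx : D = x*(4-x)) (hu : u^2 = 4*x*q - D) :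
    (2*x*(D*q^2) - u*(D*(2*q*u)))/(D*q^2)^2
      + (2*x*(x-1)/D^2)*((2*x*q - u*u)/q^2)
      + (8*x^2*(x-1)/(D^2*sD))*((1/((4*x*q)/D))*(2*x/sD)) = 2/q^3 - 2/q^2 := by
  have h1 : (2*x*(D*q^2) - u*(D*(2*q*u)))/(D*q^2)^2 = 2/q^3 - 6*x/(D*q^2) := by
    have : u*(D*(2*q*u)) = D*(2*q)*(4*x*q - D) := by rw [← hu]; ring
    rw [this]
    field_simp
    ring
  have h3 : (8*x^2*(x-1)/(D^2*sD))*((1/((4*x*q)/D))*(2*x/sD))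
      = 4*x^2*(x-1)/(D^2*q) := by
    have hss : sD*sD = D := by nlinarith [hsD2]
    field_simp
    linear_combination (-16*(x-1)) * hss
  have h2 : (2*x*(x-1)/D^2)*((2*x*q - u*u)/q^2)
      = 2*x*(x-1)/D/q^2 - 4*x^2*(x-1)/(D^2*q) := by
    have : u*u = 4*x*q - D := by rw [← hu]; ring
    rw [this]
    field_simp
    ring
  rw [h1, h2, h3]
  subst hDx
  have h4x : (4:ℝ) - x ≠ 0 := by intro h; rw [h, mul_zero] at hD; exact lt_irrefl _ hD
  field_simp
  ring

end BetaSec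

lemma integral_closed (x : ℝ) (hx0 : 0 < x) (hx4 : x < 4) :
    ∫ t in (0:ℝ)..1, (2/(x*t^2 - x*t + 1)^3 - 2/(x*t^2 - x*t + 1)^2)
      = 2*x/(x*(4-x)) + 4*x^2*(x-1)/(x*(4-x))^2
        + 16*x^2*(x-1)/((x*(4-x))^2 * Real.sqrt (x*(4-x)))
          * Real.arctan (x / Real.sqrt (x*(4-x))) := by
  set D : ℝ := x*(4-x) with hDdef
  have hD : 0 < D := by nlinarith
  set sD : ℝ := Real.sqrt D with hsDdef
  have hsD : 0 < sD := Real.sqrt_pos.mpr hD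
  have hsD2 : sD^2 = D := Real.sq_sqrt hD.le
  have hq : ∀ t : ℝ, 0 < x*t^2 - x*t + 1 := by
    intro t; nlinarith [sq_nonneg (2*t-1), sq_nonneg t]
  set B : ℝ := 2*x*(x-1)/D^2 with hBdef
  set C : ℝ := 8*x^2*(x-1)/(D^2*sD) with hCdef
  set F : ℝ → ℝ := fun t => (2*x*t - x)/(D*(x*t^2-x*t+1)^2)
      + B * ((2*x*t-x)/(x*t^2-x*t+1)) + C * Real.arctan ((2*x*t-x)/sD) with hFdef
  have hcq : Continuous fun t : ℝ => x*t^2 - x*t + 1 := by continuity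
  have hderiv : ∀ t ∈ Set.uIcc (0:ℝ) 1,
      HasDerivAt F (2/(x*t^2 - x*t + 1)^3 - 2/(x*t^2 - x*t + 1)^2) t := by
    intro t _
    have hqt := hq t
    have hu : HasDerivAt (fun t : ℝ => 2*x*t - x) (2*x) t := by
      simpa using ((hasDerivAt_id t).const_mul (2*x)).sub_const x
    have hqd : HasDerivAt (fun t : ℝ => x*t^2 - x*t + 1) (2*x*t - x) t := by
      have h1 : HasDerivAt (fun t : ℝ => x*t^2) (x*(2*t)) t := by
        simpa using (hasDerivAt_pow 2 t).const_mul x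
      have h2 : HasDerivAt (fun t : ℝ => x*t) x t := by
        simpa using (hasDerivAt_id t).const_mul x
      refine ((h1.sub h2).add_const 1).congr_deriv ?_
      ring
    have hden1 : HasDerivAt (fun t : ℝ => D*(x*t^2-x*t+1)^2)
        (D*(2*(x*t^2-x*t+1)*(2*x*t-x))) t := by
      have := ((hqd.pow 2).const_mul D)
      refine this.congr_deriv ?_
      ring
    have ht1 : HasDerivAt (fun t : ℝ => (2*x*t - x)/(D*(x*t^2-x*t+1)^2))
        ((2*x*(D*(x*t^2-x*t+1)^2) - (2*x*t-x)*(D*(2*(x*t^2-x*t+1)*(2*x*t-x))))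
          /(D*(x*t^2-x*t+1)^2)^2) t :=
      hu.div hden1 (by positivity)
    have ht2 : HasDerivAt (fun t : ℝ => B * ((2*x*t-x)/(x*t^2-x*t+1)))
        (B * ((2*x*(x*t^2-x*t+1) - (2*x*t-x)*(2*x*t-x))/(x*t^2-x*t+1)^2)) t :=
      (hu.div hqd hqt.ne').const_mul B
    have ht3 : HasDerivAt (fun t : ℝ => C * Real.arctan ((2*x*t-x)/sD))
        (C * ((1/(1+((2*x*t-x)/sD)^2)) * (2*x/sD))) t := by
      have harc := (Real.hasDerivAt_arctan ((2*x*t-x)/sD)).comp t (hu.div_const sD)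
      exact (harc.const_mul C)
    have hu2 : (2*x*t-x)^2 = 4*x*(x*t^2-x*t+1) - D := by rw [hDdef]; ring
    have h4q : 1 + ((2*x*t-x)/sD)^2 = (4*x*(x*t^2-x*t+1))/D := by
      rw [div_pow, hsD2, hu2]
      field_simp
      ring
    have := (ht1.add ht2).add ht3
    refine this.congr_deriv ?_
    rw [h4q, hBdef, hCdef]
    exact (alg_aux x D sD (x*t^2-x*t+1) (2*x*t-x) hx0 (hq t) hD hsD hsD2 hDdef hu2)
  have hcont : IntervalIntegrable
      (fun t : ℝ => 2/(x*t^2 - x*t + 1)^3 - 2/(x*t^2 - x*t + 1)^2) MeasureTheory.volume 0 1 := by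
    apply Continuous.intervalIntegrable
    apply Continuous.sub
    · exact continuous_const.div (hcq.pow 3) (fun t => pow_ne_zero _ (hq t).ne')
    · exact continuous_const.div (hcq.pow 2) (fun t => pow_ne_zero _ (hq t).ne')
  rw [integral_eq_sub_of_hasDerivAt hderiv hcont]
  simp only [hFdef]
  rw [show (2*x*(0:ℝ) - x)/sD = -((2*x*(1:ℝ)-x)/sD) by ring, Real.arctan_neg]
  rw [show (2*x*(1:ℝ)-x)/sD = x/sD by ring]
  rw [hBdef, hCdef]
  field_simp
  ring

lemma choose_two_cast (k : ℕ) : (((k+2).choose 2 : ℕ) : ℝ) * 2 = ((k:ℝ)+1)*((k:ℝ)+2) := by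
  have h : (k+2).choose 2 * 2 = (k+1)*(k+2) := by
    rw [Nat.choose_two_right]
    have h1 : k + 2 - 1 = k + 1 := rfl
    rw [h1, Nat.mul_comm (k+2) (k+1), Nat.div_mul_cancel (Nat.even_mul_succ_self (k+1)).two_dvd]
  exact_mod_cast congrArg (Nat.cast (R := ℝ)) h

lemma inner_hasSum (y : ℝ) (hy0 : 0 ≤ y) (hy1 : y < 1) :
    HasSum (fun k : ℕ => ((k:ℝ)+1)*((k:ℝ)+2) * y^(k+1)) (2*y/(1-y)^3) := by
  have hn : ‖y‖ < 1 := by rw [Real.norm_eq_abs, abs_of_nonneg hy0]; exact hy1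
  have h := (hasSum_choose_mul_geometric_of_norm_lt_one 2 hn).mul_left (2*y)
  have heq : ∀ k : ℕ, 2*y*((((k+2).choose 2 : ℕ) : ℝ) * y^k) = ((k:ℝ)+1)*((k:ℝ)+2) * y^(k+1) := by
    intro k
    have hc := choose_two_cast k
    rw [pow_succ]
    linear_combination (y^k*y) * hc
  rw [show (fun k : ℕ => 2*y*((((k+2).choose 2 : ℕ) : ℝ) * y^k))
      = (fun k : ℕ => ((k:ℝ)+1)*((k:ℝ)+2) * y^(k+1)) from funext heq] at h
  rw [show 2*y/(1-y)^3 = 2*y*(1/(1-y)^(2+1)) by ring]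
  exact h

lemma tOneSub_mem {t : ℝ} (ht : t ∈ Set.Ioc (0:ℝ) 1) : 0 ≤ t * (1-t) ∧ t*(1-t) ≤ 1/4 := by
  obtain ⟨h1, h2⟩ := ht
  constructor
  · nlinarith
  · nlinarith [sq_nonneg (2*t-1)]

lemma hasSum_main (x : ℝ) (hx0 : 0 < x) (hx4 : x < 4) :
    HasSum (fun k : ℕ => ((k:ℝ)+1) * x^(k+1) / ((2*((k:ℝ)+1)+1) * (catalan (k+1) : ℝ)))
      (2*x/(x*(4-x)) + 4*x^2*(x-1)/(x*(4-x))^2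
        + 16*x^2*(x-1)/((x*(4-x))^2 * Real.sqrt (x*(4-x)))
          * Real.arctan (x / Real.sqrt (x*(4-x)))) := by
  set μ := volume.restrict (Set.Ioc (0:ℝ) 1) with hμ
  set F : ℕ → ℝ → ℝ := fun k t => ((k:ℝ)+1)*((k:ℝ)+2)*x^(k+1) * (t*(1-t))^(k+1) with hF
  have hFcont : ∀ k, Continuous (F k) := by
    intro k; simp only [hF]; continuity
  have hFint : ∀ k, Integrable (F k) μ := fun k => (hFcont k).integrableOn_Ioc
  -- value of each integral
  have hbeta : ∀ m : ℕ, ∫ t in Set.Ioc (0:ℝ) 1, (t*(1-t))^m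
      = 1/((2*(m:ℝ)+1) * m.centralBinom) := by
    intro m
    have h := beta_nat m
    rw [intervalIntegral.integral_of_le zero_le_one] at h
    rw [← h]
    congr 1
    funext t
    rw [mul_pow]
  have hcbcat : ∀ k : ℕ, ((k:ℝ)+2) * (catalan (k+1) : ℝ) = ((k+1).centralBinom : ℝ) := by
    intro k
    have := succ_mul_catalan_eq_centralBinom (k+1)
    exact_mod_cast congrArg (Nat.cast (R := ℝ)) this
  have hcatpos : ∀ k : ℕ, (0:ℝ) < (catalan (k+1) : ℝ) := by
    intro k
    have h := succ_mul_catalan_eq_centralBinom (k+1)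
    have h2 := Nat.centralBinom_pos (k+1)
    rcases Nat.eq_zero_or_pos (catalan (k+1)) with h0 | h0
    · rw [h0, Nat.mul_zero] at h; omega
    · exact_mod_cast h0
  have hterm : ∀ k : ℕ, ∫ t, F k t ∂μ
      = ((k:ℝ)+1) * x^(k+1) / ((2*((k:ℝ)+1)+1) * (catalan (k+1) : ℝ)) := by
    intro k
    rw [hμ]
    show ∫ t in Set.Ioc (0:ℝ) 1, ((k:ℝ)+1)*((k:ℝ)+2)*x^(k+1) * (t*(1-t))^(k+1) = _
    rw [MeasureTheory.integral_const_mul, hbeta (k+1)]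
    have h1 : (0:ℝ) < 2*((k:ℝ)+1)+1 := by positivity
    have h2 := hcatpos k
    have h3 : ((k+1).centralBinom : ℝ) = ((k:ℝ)+2) * (catalan (k+1) : ℝ) := (hcbcat k).symm
    push_cast
    push_cast at h3
    rw [h3]
    field_simp
  -- nonnegativity and norm
  have hnn : ∀ k, ∀ t ∈ Set.Ioc (0:ℝ) 1, 0 ≤ F k t := by
    intro k t ht
    have := (tOneSub_mem ht).1
    simp only [hF]
    positivity
  have hnorm : ∀ k, ∫ t, ‖F k t‖ ∂μ = ∫ t, F k t ∂μ := by
    intro k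
    rw [hμ]
    apply MeasureTheory.setIntegral_congr_fun measurableSet_Ioc
    intro t ht
    exact Real.norm_of_nonneg (hnn k t ht)
  -- summability of integrals of norms
  have hsummaj : Summable (fun k : ℕ => ((k:ℝ)+1)*((k:ℝ)+2)*(x/4)^(k+1)) := by
    have hr : ‖x/4‖ < 1 := by rw [Real.norm_eq_abs, abs_of_pos (by positivity)]; linarith
    have h0 := summable_geometric_of_norm_lt_one hr
    have h1 := summable_pow_mul_geometric_of_norm_lt_one 1 hr
    have h2 := summable_pow_mul_geometric_of_norm_lt_one 2 hr
    have := ((h2.add (h1.mul_left 3)).add (h0.mul_left 2)).mul_left (x/4)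
    apply this.congr
    intro k
    push_cast
    rw [pow_succ]
    ring
  have hsum : Summable (fun k => ∫ t, ‖F k t‖ ∂μ) := by
    apply Summable.of_nonneg_of_le
        (fun k => integral_nonneg (fun t => norm_nonneg _))
        (fun k => ?_) hsummaj
    rw [hnorm k]
    show ∫ t in Set.Ioc (0:ℝ) 1, F k t ∂volume ≤ _
    have hle : ∀ t ∈ Set.Ioc (0:ℝ) 1, F k t ≤ ((k:ℝ)+1)*((k:ℝ)+2)*(x/4)^(k+1) := by
      intro t ht
      obtain ⟨hy0, hy4⟩ := tOneSub_mem ht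
      simp only [hF]
      have hb : (t*(1-t))^(k+1) ≤ (1/4:ℝ)^(k+1) := pow_le_pow_left₀ hy0 hy4 _
      have hc : (0:ℝ) ≤ ((k:ℝ)+1)*((k:ℝ)+2)*x^(k+1) := by positivity
      calc ((k:ℝ)+1)*((k:ℝ)+2)*x^(k+1) * (t*(1-t))^(k+1)
          ≤ ((k:ℝ)+1)*((k:ℝ)+2)*x^(k+1) * (1/4:ℝ)^(k+1) :=
            mul_le_mul_of_nonneg_left hb hc
        _ = ((k:ℝ)+1)*((k:ℝ)+2)*(x/4)^(k+1) := by rw [div_pow, div_pow, one_pow]; ring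
    calc ∫ t in Set.Ioc (0:ℝ) 1, F k t ∂volume
        ≤ ∫ t in Set.Ioc (0:ℝ) 1, ((k:ℝ)+1)*((k:ℝ)+2)*(x/4)^(k+1) ∂volume := by
          apply MeasureTheory.setIntegral_mono_on (hFint k) (integrableOn_const measure_Ioc_lt_top.ne)
            measurableSet_Ioc
          intro t ht
          exact hle t ht
      _ = ((k:ℝ)+1)*((k:ℝ)+2)*(x/4)^(k+1) := by
          rw [MeasureTheory.setIntegral_const]
          simp
  -- swap
  have hswap := MeasureTheory.hasSum_integral_of_summable_integral_norm hFint hsum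
  -- pointwise tsum value
  have hq : ∀ t : ℝ, 0 < x*t^2 - x*t + 1 := by
    intro t; nlinarith [sq_nonneg (2*t-1), sq_nonneg t]
  have hpt : ∀ t ∈ Set.Ioc (0:ℝ) 1,
      (∑' k, F k t) = 2/(x*t^2 - x*t + 1)^3 - 2/(x*t^2 - x*t + 1)^2 := by
    intro t ht
    obtain ⟨hy0, hy4⟩ := tOneSub_mem ht
    have hy0' : 0 ≤ x*(t*(1-t)) := by positivity
    have hy1 : x*(t*(1-t)) < 1 := by nlinarith
    have h := inner_hasSum (x*(t*(1-t))) hy0' hy1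
    have heq : ∀ k : ℕ, ((k:ℝ)+1)*((k:ℝ)+2) * (x*(t*(1-t)))^(k+1) = F k t := by
      intro k; simp only [hF]; rw [mul_pow]; ring
    rw [show (fun k : ℕ => ((k:ℝ)+1)*((k:ℝ)+2) * (x*(t*(1-t)))^(k+1)) = (fun k => F k t) from funext heq] at h
    rw [h.tsum_eq]
    have hqt := hq t
    have h1q : 1 - x*(t*(1-t)) = x*t^2 - x*t + 1 := by ring
    rw [h1q]
    have h2 : x*(t*(1-t)) = 1 - (x*t^2 - x*t + 1) := by ring
    rw [h2]
    field_simp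
  have hint : ∫ t, (∑' k, F k t) ∂μ
      = 2*x/(x*(4-x)) + 4*x^2*(x-1)/(x*(4-x))^2
        + 16*x^2*(x-1)/((x*(4-x))^2 * Real.sqrt (x*(4-x)))
          * Real.arctan (x / Real.sqrt (x*(4-x))) := by
    rw [hμ]
    rw [MeasureTheory.setIntegral_congr_fun measurableSet_Ioc hpt]
    rw [← intervalIntegral.integral_of_le zero_le_one]
    exact integral_closed x hx0 hx4
  rw [hint] at hswap
  simp only [hterm] at hswap
  exact hswap


lemma zpow_fact (c : ℝ) (hc : c ≠ 0) (n : ℕ) (s : ℤ) :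
    c ^ (2*((n:ℤ)+1)+s) = (c^2)^(n+1) * c^s := by
  rw [zpow_add₀ hc, zpow_mul, show ((n:ℤ)+1) = ((n+1:ℕ):ℤ) by push_cast; ring,
    show (2:ℤ) = ((2:ℕ):ℤ) from rfl, zpow_natCast, zpow_natCast]

lemma hs5a : Real.sqrt 5 = 2*goldenAlpha - 1 := by unfold goldenAlpha; ring
lemma hs5b : Real.sqrt 5 = 1 - 2*goldenBeta := by unfold goldenBeta; ring

lemma hDa : goldenAlpha^2*(4-goldenAlpha^2) = Real.sqrt 5*goldenAlpha := by
  rw [hs5a]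
  linear_combination (-(goldenAlpha^2)-goldenAlpha) * ga_sq

lemma hsqa : Real.sqrt (goldenAlpha^2*(4-goldenAlpha^2)) = omegaConst := by
  unfold omegaConst; rw [hDa]

lemma hw2 : omegaConst^2 = goldenAlpha + 2 := by
  rw [om_sq, hs5a]
  linear_combination 2 * ga_sq

lemma hab1 : goldenAlpha + goldenBeta = 1 := by unfold goldenAlpha goldenBeta; ring

lemma hDb : goldenBeta^2*(4-goldenBeta^2) = (omegaConst/goldenAlpha)^2 := by
  have e1 : goldenBeta^2*(4-goldenBeta^2) = goldenBeta+2 := by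
    linear_combination (-(goldenBeta^2)-goldenBeta+2) * gb_sq
  have e2 : (goldenBeta+2)*goldenAlpha^2 = goldenAlpha+2 := by
    linear_combination (goldenBeta+2)*ga_sq + gab + hab1
  rw [div_pow, hw2, eq_div_iff (pow_ne_zero 2 ga_ne), e1]
  exact e2

lemma hsqb : Real.sqrt (goldenBeta^2*(4-goldenBeta^2)) = omegaConst/goldenAlpha := by
  rw [hDb]
  exact Real.sqrt_sq (div_pos om_pos ga_pos).le

lemma IdA :
    2*(goldenAlpha^2)/(Real.sqrt 5*goldenAlpha)
      + 4*(goldenAlpha^2)^2*(goldenAlpha^2-1)/(Real.sqrt 5*goldenAlpha)^2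
      + 16*(goldenAlpha^2)^2*(goldenAlpha^2-1)/((Real.sqrt 5*goldenAlpha)^2*omegaConst)
        *(3*Real.pi/10)
    = 2*goldenAlpha + 8/5
      + 8*Real.sqrt 5*Real.pi*omegaConst/125*(Real.sqrt 5*goldenAlpha*goldenAlpha+2) := by
  rw [hs5a]
  have ha := ga_sq
  have hw := hw2
  have ha0 := ga_pos
  have hw0 := om_pos
  have hs : 2*goldenAlpha - 1 > 0 := by rw [← hs5a]; exact s5_pos
  have P1 : 2*(goldenAlpha^2)/((2*goldenAlpha-1)*goldenAlpha)
      + 4*(goldenAlpha^2)^2*(goldenAlpha^2-1)/((2*goldenAlpha-1)*goldenAlpha)^2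
      = 2*goldenAlpha+8/5 := by
    field_simp
    linear_combination (8 - 20*goldenAlpha + 20*goldenAlpha^2) * ha
  have P2 : 16*(goldenAlpha^2)^2*(goldenAlpha^2-1)/(((2*goldenAlpha-1)*goldenAlpha)^2*omegaConst)
        *(3*Real.pi/10)
      = 8*(2*goldenAlpha-1)*Real.pi*omegaConst/125*((2*goldenAlpha-1)*goldenAlpha*goldenAlpha+2) := by
    field_simp
    rw [div_eq_iff (pow_ne_zero _ (by linarith))]
    linear_combination (-320 + 2080*goldenAlpha + 880*goldenAlpha^2
        + 640*goldenAlpha^3 - 1280*goldenAlpha^4 - 1280*goldenAlpha^5) * ha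
      + (160 - 960*goldenAlpha + 1840*goldenAlpha^2 - 640*goldenAlpha^3
        - 1920*goldenAlpha^4 + 2560*goldenAlpha^5 - 1280*goldenAlpha^6) * hw
  linear_combination P1 + P2

lemma IdB :
    2*(goldenBeta^2)/((omegaConst/goldenAlpha)^2)
      + 4*(goldenBeta^2)^2*(goldenBeta^2-1)/((omegaConst/goldenAlpha)^2)^2
      + 16*(goldenBeta^2)^2*(goldenBeta^2-1)/(((omegaConst/goldenAlpha)^2)^2*(omegaConst/goldenAlpha))
        *(Real.pi/10)
    = 2*goldenBeta + 8/5
      + 8*Real.sqrt 5*Real.pi*omegaConst/125*(Real.sqrt 5*goldenAlpha*goldenBeta+2) := by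
  have hv0 : 0 < omegaConst/goldenAlpha := div_pos om_pos ga_pos
  set v := omegaConst/goldenAlpha with hvdef
  have hv : v^2 = goldenBeta+2 := by
    rw [hvdef, ← hDb]
    linear_combination (-(goldenBeta^2)-goldenBeta+2) * gb_sq
  have hom : omegaConst = (1-goldenBeta)*v := by
    rw [hvdef, show 1-goldenBeta = goldenAlpha by linarith [hab1]]
    field_simp
    rw [mul_div_assoc, div_self ga_ne, mul_one]
  rw [hs5b, hom, show goldenAlpha = 1-goldenBeta by linarith [hab1]]
  have hb := gb_sq
  have hb0 := gb_ne
  have P3 : 2*(goldenBeta^2)/v^2 + 4*(goldenBeta^2)^2*(goldenBeta^2-1)/(v^2)^2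
      = 2*goldenBeta + 8/5 := by
    field_simp
    linear_combination (32 + 40*goldenBeta + 20*goldenBeta^2 + 20*goldenBeta^3
        + 20*goldenBeta^4) * hb
      + (-16 - 8*v^2 - 28*goldenBeta - 10*goldenBeta*v^2) * hv
  have P4 : 16*(goldenBeta^2)^2*(goldenBeta^2-1)/((v^2)^2*v)*(Real.pi/10)
      = 8*(1-2*goldenBeta)*Real.pi*((1-goldenBeta)*v)/125
        *((1-2*goldenBeta)*(1-goldenBeta)*goldenBeta+2) := by
    field_simp
    linear_combination ((1280 - 2560*goldenBeta - 1280*goldenBeta^2 + 2880*goldenBeta^3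
        + 1280*goldenBeta^4 - 1280*goldenBeta^5 - 320*goldenBeta^6)) * hb
      + ((-640 - 320*v^2 - 160*v^4 + 960*goldenBeta + 640*goldenBeta*v^2 + 400*goldenBeta*v^4
        + 2080*goldenBeta^2 + 720*goldenBeta^2*v^2 + 160*goldenBeta^2*v^4 - 3120*goldenBeta^3
        - 1920*goldenBeta^3*v^2 - 1040*goldenBeta^3*v^4 - 160*goldenBeta^4 + 880*goldenBeta^4*v^2
        + 960*goldenBeta^4*v^4 + 1520*goldenBeta^5 + 320*goldenBeta^5*v^2 - 320*goldenBeta^5*v^4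
        - 320*goldenBeta^6 - 320*goldenBeta^6*v^2 - 320*goldenBeta^7)) * hv
  linear_combination P3 + P4

/-- For every integer `s`,
`∑_{n=1}^∞ n·F_{2n+s}/((2n+1)·C_n)
  = 2·F_{s+1} + (8/5)·F_s + (8√5·π·ω/125)·(√5·α·F_{s+1} + 2·F_s)`. -/
theorem fib_n_catalan_sum (s : ℤ) :
    ∑' n : ℕ, ((n : ℝ) + 1) * fibZ (2 * ((n : ℤ) + 1) + s)
        / ((2 * ((n : ℝ) + 1) + 1) * (catalan (n + 1) : ℝ))
      = 2 * fibZ (s + 1) + 8 / 5 * fibZ s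
        + 8 * Real.sqrt 5 * Real.pi * omegaConst / 125
          * (Real.sqrt 5 * goldenAlpha * fibZ (s + 1) + 2 * fibZ s) := by
  have ha2pos : 0 < goldenAlpha^2 := pow_pos ga_pos 2
  have ha2lt : goldenAlpha^2 < 4 := by nlinarith [ga_sq, ga_lt_two]
  have hb2pos : 0 < goldenBeta^2 := by nlinarith [gb_neg]
  have hb2lt : goldenBeta^2 < 4 := by nlinarith [gb_sq, gb_neg]
  have hcatpos : ∀ k : ℕ, (0:ℝ) < (catalan (k+1) : ℝ) := by
    intro k
    have h := succ_mul_catalan_eq_centralBinom (k+1)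
    have h2 := Nat.centralBinom_pos (k+1)
    rcases Nat.eq_zero_or_pos (catalan (k+1)) with h0 | h0
    · rw [h0, Nat.mul_zero] at h; omega
    · exact_mod_cast h0
  have h1 := hasSum_main _ ha2pos ha2lt
  have h2 := hasSum_main _ hb2pos hb2lt
  have h3 := (h1.mul_left (goldenAlpha^s/Real.sqrt 5)).sub (h2.mul_left (goldenBeta^s/Real.sqrt 5))
  have hfun : (fun k : ℕ => goldenAlpha^s/Real.sqrt 5
        * (((k:ℝ)+1)*(goldenAlpha^2)^(k+1)/((2*((k:ℝ)+1)+1)*(catalan (k+1):ℝ)))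
      - goldenBeta^s/Real.sqrt 5
        * (((k:ℝ)+1)*(goldenBeta^2)^(k+1)/((2*((k:ℝ)+1)+1)*(catalan (k+1):ℝ))))
      = (fun n : ℕ => ((n : ℝ) + 1) * fibZ (2 * ((n : ℤ) + 1) + s)
        / ((2 * ((n : ℝ) + 1) + 1) * (catalan (n + 1) : ℝ))) := by
    funext n
    unfold fibZ
    rw [zpow_fact _ ga_ne, zpow_fact _ gb_ne]
    have hd : ((2*((n:ℝ)+1)+1)*(catalan (n+1):ℝ)) ≠ 0 :=
      ne_of_gt (mul_pos (by positivity) (hcatpos n))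
    have h5 := s5_pos.ne'
    field_simp
  rw [hfun] at h3
  rw [h3.tsum_eq]
  rw [hsqa, arctan_ga, hDa]
  rw [hsqb]
  rw [show goldenBeta^2/(omegaConst/goldenAlpha) = goldenAlpha*goldenBeta^2/omegaConst by
    have ho := om_ne; have hg := ga_ne; field_simp]
  rw [arctan_gb, hDb]
  rw [IdA, IdB]
  unfold fibZ
  rw [zpow_add_one₀ ga_ne, zpow_add_one₀ gb_ne]
  have h5 := s5_pos.ne'
  field_simp
  ring
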